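/- arXiv:1408.3016 — 4 statements merged into one kernel-verified Lean document; each statement's English description precedes it below -/
import Mathlib

section
/- Let A ∈ ℝ^{n×m}, let C ⊆ ℝ^m be a closed convex cone with C ≠ {0}, and let D ⊆ ℝ^n be a closed convex cone. Then: (i) ‖A‖_{C→D} = 0 if and only if C ⊆ (AᵀD)°; (ii) σ_{C→D}(A) = 0 if and only if C ∩ (AᵀD)° ≠ {0}, which holds if and only if AC ∩ D° ≠ {0} or ker A ∩ C ≠ {0}. -/
open MeasureTheory ProbabilityTheory Metric Set
open scoped InnerProductSpace
open scoped Classical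
open scoped Pointwise

set_option maxHeartbeats 1000000

noncomputable section

/-- Euclidean space `ℝ^k`. -/
abbrev Euc (k : ℕ) : Type := EuclideanSpace ℝ (Fin k)

/-- The linear action of a matrix `A ∈ ℝ^{n×m}` on Euclidean space, `x ↦ Ax`. -/
def mulE {m n : ℕ} (A : Matrix (Fin n) (Fin m) ℝ) (x : Euc m) : Euc n :=
  Matrix.toEuclideanLin A x

/-- The metric projection onto a set `S`: the point of `S` closest to `y`
(if a unique closest point characterizing property holds; junk value `0` otherwise). -/
def metricProj {k : ℕ} (S : Set (Euc k)) (y : Euc k) : Euc k :=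
  if h : ∃ z, z ∈ S ∧ ∀ w ∈ S, dist y z ≤ dist y w then h.choose else 0

/-- `C` is a closed convex cone (containing the origin). -/
def IsClosedConvexCone {k : ℕ} (C : Set (Euc k)) : Prop :=
  IsClosed C ∧ Convex ℝ C ∧ (∀ c : ℝ, 0 ≤ c → ∀ x ∈ C, c • x ∈ C) ∧ (0 : Euc k) ∈ C

/-- The polar cone `S° = {z | ⟨x,z⟩ ≤ 0 ∀ x ∈ S}`. -/
def polarCone {k : ℕ} (S : Set (Euc k)) : Set (Euc k) :=
  {z | ∀ x ∈ S, ⟪x, z⟫_ℝ ≤ 0}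

/-- The restricted norm `‖A‖_{C→D} = max_{x ∈ C ∩ S^{m-1}} ‖Proj_D (Ax)‖`. -/
def resNorm {m n : ℕ} (C : Set (Euc m)) (D : Set (Euc n)) (A : Matrix (Fin n) (Fin m) ℝ) : ℝ :=
  sSup ((fun x => ‖metricProj D (mulE A x)‖) '' (C ∩ sphere 0 1))

/-- The restricted singular value `σ_{C→D}(A) = min_{x ∈ C ∩ S^{m-1}} ‖Proj_D (Ax)‖`. -/
def resSval {m n : ℕ} (C : Set (Euc m)) (D : Set (Euc n)) (A : Matrix (Fin n) (Fin m) ℝ) : ℝ :=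
  sInf ((fun x => ‖metricProj D (mulE A x)‖) '' (C ∩ sphere 0 1))

/-- The restricted norm for arbitrary (not necessarily closed) cones:
`‖B‖_{K→K'} = sup { ⟨Bx, y⟩ : x ∈ K ∩ B^ℓ, y ∈ K' ∩ B^p }`. -/
def resNormGen {l p : ℕ} (K : Set (Euc l)) (K' : Set (Euc p))
    (B : Matrix (Fin p) (Fin l) ℝ) : ℝ :=
  sSup (Set.image2 (fun x y => ⟪mulE B x, y⟫_ℝ) (K ∩ closedBall 0 1) (K' ∩ closedBall 0 1))

/-- The operator (spectral) norm of a matrix. -/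
def opNorm {m n : ℕ} (A : Matrix (Fin n) (Fin m) ℝ) : ℝ :=
  ‖LinearMap.toContinuousLinearMap (Matrix.toEuclideanLin A)‖

/-- The standard Gaussian measure on `ℝ^k` (i.i.d. N(0,1) coordinates). -/
def stdGaussianE (k : ℕ) : Measure (Euc k) :=
  Measure.map (⇑(EuclideanSpace.equiv (Fin k) ℝ).symm)
    (Measure.pi fun _ : Fin k => gaussianReal 0 1)

/-- The standard Gaussian measure on `n × m` arrays (i.i.d. N(0,1) entries). -/
def stdGaussianPi (n m : ℕ) : Measure (Fin n → Fin m → ℝ) :=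
  Measure.pi fun _ : Fin n => Measure.pi fun _ : Fin m => gaussianReal 0 1

/-- The support function `h_K(x) = sup_{z ∈ K} ⟨x, z⟩`. -/
def suppFn {k : ℕ} (K : Set (Euc k)) (x : Euc k) : ℝ := sSup ((fun z => ⟪x, z⟫_ℝ) '' K)

/-- The capped-angle cosine `cos d̄(X,Y) = max{⟨x,y⟩ : x ∈ X ∩ B, y ∈ Y ∩ B}`. -/
def cosAng {k : ℕ} (X Y : Set (Euc k)) : ℝ :=
  sSup (Set.image2 (fun x y => ⟪x, y⟫_ℝ) (X ∩ closedBall 0 1) (Y ∩ closedBall 0 1))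

/-- `sin d̄(X,Y) = √(1 - cos d̄(X,Y)²)`. -/
def sinAng {k : ℕ} (X Y : Set (Euc k)) : ℝ := Real.sqrt (1 - cosAng X Y ^ 2)

/-- The Kronecker (tensor) product `x ⊗ y ∈ ℝ^{mn}`. -/
def kron {m n : ℕ} (x : Euc m) (y : Euc n) : EuclideanSpace ℝ (Fin m × Fin n) :=
  (EuclideanSpace.equiv (Fin m × Fin n) ℝ).symm (fun p => x p.1 * y p.2)

/-- The primal feasible set `𝒫(C,D) = {A | ∃ x ∈ C \ {0}, Ax ∈ D°}`. -/
def primalSet {m n : ℕ} (C : Set (Euc m)) (D : Set (Euc n)) :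
    Set (Matrix (Fin n) (Fin m) ℝ) :=
  {A | ∃ x ∈ C, x ≠ 0 ∧ mulE A x ∈ polarCone D}

/-- The dual feasible set `𝒟(C,D) = {A | ∃ y ∈ D \ {0}, -Aᵀy ∈ C°}`. -/
def dualSet {m n : ℕ} (C : Set (Euc m)) (D : Set (Euc n)) :
    Set (Matrix (Fin n) (Fin m) ℝ) :=
  {A | ∃ y ∈ D, y ≠ 0 ∧ -(mulE A.transpose y) ∈ polarCone C}

/-- `K₂` is a `0`-contraction of `K₁`: there are generating sets `M₁` of `K₁`, `M₂` of `K₂`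
(i.e. `Kᵢ` is the closed convex hull of `Mᵢ`) and a surjection `φ : M₁ → M₂` that is
`1`-Lipschitz and norm-nonincreasing. -/
def IsZeroContractionOf {E₁ E₂ : Type*} [NormedAddCommGroup E₁] [NormedSpace ℝ E₁]
    [NormedAddCommGroup E₂] [NormedSpace ℝ E₂] (K₁ : Set E₁) (K₂ : Set E₂) : Prop :=
  ∃ (M₁ : Set E₁) (M₂ : Set E₂) (φ : E₁ → E₂),
    closure (convexHull ℝ M₁) = K₁ ∧ closure (convexHull ℝ M₂) = K₂ ∧
    φ '' M₁ = M₂ ∧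
    (∀ x ∈ M₁, ∀ x' ∈ M₁, ‖φ x - φ x'‖ ≤ ‖x - x'‖) ∧
    (∀ x ∈ M₁, ‖φ x‖ ≤ ‖x‖)

/-- The pair `(x, y)` regarded as an element of the Euclidean (ℓ²) product. -/
def pairL2 {m n : ℕ} (x : Euc m) (y : Euc n) : WithLp 2 (Euc m × Euc n) :=
  (WithLp.equiv 2 (Euc m × Euc n)).symm (x, y)

/-- The product `K × K'` as a subset of the Euclidean (ℓ²) product space. -/
def prodL2 {m n : ℕ} (K : Set (Euc m)) (K' : Set (Euc n)) : Set (WithLp 2 (Euc m × Euc n)) :=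
  {q | ((WithLp.equiv 2 (Euc m × Euc n)) q).1 ∈ K ∧ ((WithLp.equiv 2 (Euc m × Euc n)) q).2 ∈ K'}



section Helpers

variable {k : ℕ}

lemma metricProj_spec {S : Set (Euc k)} (hne : S.Nonempty) (hcl : IsClosed S)
    (hconv : Convex ℝ S) (y : Euc k) :
    metricProj S y ∈ S ∧ ∀ w ∈ S, dist y (metricProj S y) ≤ dist y w := by
  have hex : ∃ z, z ∈ S ∧ ∀ w ∈ S, dist y z ≤ dist y w := by
    obtain ⟨v, hv, hmin⟩ := exists_norm_eq_iInf_of_complete_convex hne hcl.isComplete hconv y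
    have δ_le : ∀ w : S, (⨅ w : S, ‖y - (w : Euc k)‖) ≤ ‖y - (w : Euc k)‖ :=
      ciInf_le ⟨0, fun _ ⟨_, h⟩ => h ▸ norm_nonneg _⟩
    refine ⟨v, hv, fun w hw => ?_⟩
    rw [dist_eq_norm, dist_eq_norm, hmin]
    exact δ_le ⟨w, hw⟩
  rw [metricProj, dif_pos hex]
  exact hex.choose_spec

lemma metricProj_norm_eq_iInf {S : Set (Euc k)} (hne : S.Nonempty) (hcl : IsClosed S)
    (hconv : Convex ℝ S) (y : Euc k) :
    ‖y - metricProj S y‖ = ⨅ w : S, ‖y - w‖ := by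
  haveI : Nonempty S := hne.to_subtype
  obtain ⟨hmem, hmin⟩ := metricProj_spec hne hcl hconv y
  have δ_le : ∀ w : S, (⨅ w : S, ‖y - (w : Euc k)‖) ≤ ‖y - (w : Euc k)‖ :=
    ciInf_le ⟨0, fun _ ⟨_, h⟩ => h ▸ norm_nonneg _⟩
  refine le_antisymm ?_ (δ_le ⟨_, hmem⟩)
  refine le_ciInf fun w => ?_
  have := hmin w w.2
  rwa [dist_eq_norm, dist_eq_norm] at this

lemma metricProj_inner_le {S : Set (Euc k)} (hne : S.Nonempty) (hcl : IsClosed S)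
    (hconv : Convex ℝ S) (y : Euc k) :
    ∀ w ∈ S, ⟪y - metricProj S y, w - metricProj S y⟫_ℝ ≤ 0 :=
  (norm_eq_iInf_iff_real_inner_le_zero hconv (metricProj_spec hne hcl hconv y).1).mp
    (metricProj_norm_eq_iInf hne hcl hconv y)

lemma metricProj_eq_of_inner {S : Set (Euc k)} (hne : S.Nonempty) (hcl : IsClosed S)
    (hconv : Convex ℝ S) (y z : Euc k) (hz : z ∈ S)
    (hzi : ∀ w ∈ S, ⟪y - z, w - z⟫_ℝ ≤ 0) : metricProj S y = z := by
  set P := metricProj S y with hP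
  have hPmem := (metricProj_spec hne hcl hconv y).1
  have h1 : ⟪y - P, z - P⟫_ℝ ≤ 0 := metricProj_inner_le hne hcl hconv y z hz
  have h2 : ⟪y - z, P - z⟫_ℝ ≤ 0 := hzi P hPmem
  have h1' : 0 ≤ ⟪y - P, P - z⟫_ℝ := by
    rw [show P - z = -(z - P) by abel, inner_neg_right]; linarith
  have key : ⟪P - z, P - z⟫_ℝ = ⟪y - z, P - z⟫_ℝ - ⟪y - P, P - z⟫_ℝ := by
    rw [← inner_sub_left]; congr 1; abel
  have hsq : ‖P - z‖ ^ 2 ≤ 0 := by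
    rw [← real_inner_self_eq_norm_sq, key]; linarith
  have hnz : ‖P - z‖ = 0 := le_antisymm (by nlinarith [norm_nonneg (P - z)]) (norm_nonneg _)
  exact sub_eq_zero.mp (norm_eq_zero.mp hnz)

lemma metricProj_lip {S : Set (Euc k)} (hne : S.Nonempty) (hcl : IsClosed S)
    (hconv : Convex ℝ S) (y z : Euc k) :
    ‖metricProj S y - metricProj S z‖ ≤ ‖y - z‖ := by
  set P := metricProj S y
  set Q := metricProj S z
  have h1 : ⟪y - P, Q - P⟫_ℝ ≤ 0 :=
    metricProj_inner_le hne hcl hconv y Q (metricProj_spec hne hcl hconv z).1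
  have h2 : ⟪z - Q, P - Q⟫_ℝ ≤ 0 :=
    metricProj_inner_le hne hcl hconv z P (metricProj_spec hne hcl hconv y).1
  have key : ⟪P - Q, P - Q⟫_ℝ ≤ ⟪y - z, P - Q⟫_ℝ := by
    have h1' : 0 ≤ ⟪y - P, P - Q⟫_ℝ := by
      rw [show P - Q = -(Q - P) by abel, inner_neg_right]; linarith
    have e : ⟪y - z, P - Q⟫_ℝ - ⟪P - Q, P - Q⟫_ℝ
        = ⟪y - P, P - Q⟫_ℝ - ⟪z - Q, P - Q⟫_ℝ := by
      rw [← inner_sub_left, ← inner_sub_left]; congr 1; abel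
    linarith
  have hCS : ⟪y - z, P - Q⟫_ℝ ≤ ‖y - z‖ * ‖P - Q‖ := real_inner_le_norm _ _
  have hsq : ‖P - Q‖ ^ 2 ≤ ‖y - z‖ * ‖P - Q‖ := by
    rw [← real_inner_self_eq_norm_sq]; linarith
  rcases eq_or_lt_of_le (norm_nonneg (P - Q)) with h | h
  · rw [← h]; exact norm_nonneg _
  · nlinarith

lemma metricProj_continuous {S : Set (Euc k)} (hne : S.Nonempty) (hcl : IsClosed S)
    (hconv : Convex ℝ S) : Continuous (metricProj S) := by
  have : LipschitzWith 1 (metricProj S) := by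
    refine LipschitzWith.of_dist_le_mul fun y z => ?_
    rw [dist_eq_norm, dist_eq_norm, NNReal.coe_one, one_mul]
    exact metricProj_lip hne hcl hconv y z

  exact this.continuous

lemma metricProj_self {S : Set (Euc k)} (hne : S.Nonempty) (hcl : IsClosed S)
    (hconv : Convex ℝ S) {y : Euc k} (hy : y ∈ S) : metricProj S y = y :=
  metricProj_eq_of_inner hne hcl hconv y y hy (by simp)

lemma metricProj_zero_iff_cone {D : Set (Euc k)} (hD : IsClosedConvexCone D) (y : Euc k) :
    metricProj D y = 0 ↔ y ∈ polarCone D := by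
  obtain ⟨hcl, hconv, hcone, h0⟩ := hD
  have hne : D.Nonempty := ⟨0, h0⟩
  constructor
  · intro h
    intro w hw
    have := metricProj_inner_le hne hcl hconv y w hw
    rw [h, sub_zero, sub_zero] at this
    rwa [real_inner_comm]
  · intro h
    refine metricProj_eq_of_inner hne hcl hconv y 0 h0 fun w hw => ?_
    rw [sub_zero, sub_zero, real_inner_comm]
    exact h w hw

lemma metricProj_norm_le_cone {D : Set (Euc k)} (hD : IsClosedConvexCone D) (y : Euc k) :
    ‖metricProj D y‖ ≤ ‖y‖ := by
  obtain ⟨hcl, hconv, hcone, h0⟩ := hD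
  have hne : D.Nonempty := ⟨0, h0⟩
  have h := metricProj_lip hne hcl hconv y 0
  rwa [metricProj_self hne hcl hconv h0, sub_zero, sub_zero] at h

lemma inner_mulE_transpose {m n : ℕ} (A : Matrix (Fin n) (Fin m) ℝ) (y : Euc n) (x : Euc m) :
    ⟪mulE A.transpose y, x⟫_ℝ = ⟪y, mulE A x⟫_ℝ := by
  rw [mulE, mulE, ← Matrix.conjTranspose_eq_transpose_of_trivial,
    Matrix.toEuclideanLin_conjTranspose_eq_adjoint, LinearMap.adjoint_inner_left]

lemma mem_polar_transpose_iff {m n : ℕ} (A : Matrix (Fin n) (Fin m) ℝ) (D : Set (Euc n))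
    (x : Euc m) :
    x ∈ polarCone (mulE A.transpose '' D) ↔ mulE A x ∈ polarCone D := by
  constructor
  · intro h y hy
    have := h (mulE A.transpose y) ⟨y, hy, rfl⟩
    rwa [inner_mulE_transpose] at this
  · rintro h _ ⟨y, hy, rfl⟩
    rw [inner_mulE_transpose]
    exact h y hy

lemma polarCone_smul_mem {S : Set (Euc k)} {z : Euc k} (hz : z ∈ polarCone S) {c : ℝ}
    (hc : 0 ≤ c) : c • z ∈ polarCone S := fun x hx => by
  rw [real_inner_smul_right]
  exact mul_nonpos_of_nonneg_of_nonpos hc (hz x hx)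

lemma zero_mem_polarCone (S : Set (Euc k)) : (0 : Euc k) ∈ polarCone S := fun x _ => by simp

lemma mulE_smul {m n : ℕ} (A : Matrix (Fin n) (Fin m) ℝ) (c : ℝ) (x : Euc m) :
    mulE A (c • x) = c • mulE A x := map_smul (Matrix.toEuclideanLin A) c x

end Helpers

/-- `‖A‖_{C→D} = 0 ↔ C ⊆ (AᵀD)°`, and `σ_{C→D}(A) = 0 ↔ C ∩ (AᵀD)° ≠ {0}`,
which holds iff `AC ∩ D° ≠ {0}` or `ker A ∩ C ≠ {0}`. -/
theorem statement5 {m n : ℕ} (A : Matrix (Fin n) (Fin m) ℝ)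
    (C : Set (Euc m)) (D : Set (Euc n))
    (hC : IsClosedConvexCone C) (hCne : C ≠ {0}) (hD : IsClosedConvexCone D) :
    (resNorm C D A = 0 ↔ C ⊆ polarCone (mulE A.transpose '' D)) ∧
    (resSval C D A = 0 ↔ C ∩ polarCone (mulE A.transpose '' D) ≠ {0}) ∧
    (C ∩ polarCone (mulE A.transpose '' D) ≠ {0} ↔
      (mulE A '' C) ∩ polarCone D ≠ {0} ∨ {x : Euc m | mulE A x = 0} ∩ C ≠ {0}) := by
  obtain ⟨hCcl, hCconv, hCcone, hC0⟩ := hC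
  obtain ⟨hDcl, hDconv, hDcone, hD0⟩ := hD
  have hDcc : IsClosedConvexCone D := ⟨hDcl, hDconv, hDcone, hD0⟩
  -- there is a nonzero element of C
  have hCex : ∃ x ∈ C, x ≠ 0 := by
    by_contra h
    push_neg at h
    apply hCne
    ext x
    simp only [Set.mem_singleton_iff]
    exact ⟨fun hx => h x hx, fun hx => hx ▸ hC0⟩
  obtain ⟨x₀, hx₀C, hx₀⟩ := hCex
  set f : Euc m → ℝ := fun x => ‖metricProj D (mulE A x)‖ with hf
  set T : Set (Euc m) := C ∩ sphere 0 1 with hT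
  have hresN : resNorm C D A = sSup (f '' T) := rfl
  have hresS : resSval C D A = sInf (f '' T) := rfl
  -- normalization
  have hnorm : ∀ x ∈ C, x ≠ 0 → (‖x‖⁻¹ • x ∈ T) := by
    intro x hx hx0
    refine ⟨hCcone _ (inv_nonneg.mpr (norm_nonneg x)) x hx, ?_⟩
    rw [mem_sphere_zero_iff_norm, norm_smul, norm_inv, norm_norm,
      inv_mul_cancel₀ (norm_ne_zero_iff.mpr hx0)]
  have hTne : T.Nonempty := ⟨_, hnorm x₀ hx₀C hx₀⟩
  have hfTne : (f '' T).Nonempty := hTne.image f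
  have hfnonneg : ∀ v ∈ f '' T, 0 ≤ v := by rintro _ ⟨x, _, rfl⟩; exact norm_nonneg _
  -- f x = 0 iff A x ∈ D°
  have hf0 : ∀ x : Euc m, f x = 0 ↔ mulE A x ∈ polarCone D := by
    intro x
    rw [hf]
    simp only [norm_eq_zero]
    exact metricProj_zero_iff_cone hDcc (mulE A x)
  -- membership in polar cone scales
  have hscale : ∀ x ∈ C, x ≠ 0 → (mulE A x ∈ polarCone D ↔ mulE A (‖x‖⁻¹ • x) ∈ polarCone D) := by
    intro x hx hx0
    rw [mulE_smul]
    constructor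
    · intro h
      exact polarCone_smul_mem h (inv_nonneg.mpr (norm_nonneg x))
    · intro h
      have := polarCone_smul_mem h (norm_nonneg x)
      rwa [smul_inv_smul₀ (norm_ne_zero_iff.mpr hx0)] at this
  constructor
  · -- resNorm
    have hbdd : BddAbove (f '' T) := by
      refine ⟨‖LinearMap.toContinuousLinearMap (Matrix.toEuclideanLin A)‖, ?_⟩
      rintro _ ⟨x, ⟨_, hxs⟩, rfl⟩
      rw [mem_sphere_zero_iff_norm] at hxs
      calc f x ≤ ‖mulE A x‖ := metricProj_norm_le_cone hDcc _
        _ = ‖LinearMap.toContinuousLinearMap (Matrix.toEuclideanLin A) x‖ := rfl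
        _ ≤ ‖LinearMap.toContinuousLinearMap (Matrix.toEuclideanLin A)‖ * ‖x‖ :=
            ContinuousLinearMap.le_opNorm _ _
        _ = _ := by rw [hxs, mul_one]
    constructor
    · intro h x hx
      rw [mem_polar_transpose_iff]
      rcases eq_or_ne x 0 with rfl | hx0
      · rw [show mulE A 0 = 0 from map_zero (Matrix.toEuclideanLin A)]
        exact zero_mem_polarCone D
      · rw [hscale x hx hx0, ← hf0]
        have hle : f (‖x‖⁻¹ • x) ≤ 0 := by
          have := le_csSup hbdd (⟨_, hnorm x hx hx0, rfl⟩ : f (‖x‖⁻¹ • x) ∈ f '' T)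
          rwa [← hresN, h] at this
        exact le_antisymm hle (norm_nonneg _)
    · intro h
      rw [hresN]
      obtain ⟨v, hv⟩ := hfTne
      refine le_antisymm (csSup_le ⟨v, hv⟩ ?_) (le_trans (hfnonneg v hv) (le_csSup hbdd hv))
      rintro _ ⟨x, ⟨hxC, _⟩, rfl⟩
      exact le_of_eq ((hf0 x).mpr ((mem_polar_transpose_iff A D x).mp (h hxC)))
  refine ⟨?_, ?_⟩
  · -- resSval
    have hbddb : BddBelow (f '' T) := ⟨0, hfnonneg⟩
    constructor
    · intro h
      -- compactness argument
      have hTcomp : IsCompact T := (isCompact_sphere (0 : Euc m) 1).inter_left hCcl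
      have hfcont : Continuous f := by
        have h1 : Continuous (mulE A) := by
          have : Continuous (Matrix.toEuclideanLin A) :=
            LinearMap.continuous_of_finiteDimensional _
          exact this
        exact continuous_norm.comp
          ((metricProj_continuous ⟨0, hD0⟩ hDcl hDconv).comp h1)
      have hmem : sInf (f '' T) ∈ f '' T :=
        (hTcomp.image hfcont).sInf_mem hfTne
      rw [← hresS, h] at hmem
      obtain ⟨x, ⟨hxC, hxs⟩, hfx⟩ := hmem
      rw [mem_sphere_zero_iff_norm] at hxs
      intro hsingle
      have hxmem : x ∈ C ∩ polarCone (mulE A.transpose '' D) := by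
        refine ⟨hxC, (mem_polar_transpose_iff A D x).mpr ?_⟩
        exact (hf0 x).mp hfx
      rw [hsingle] at hxmem
      simp only [Set.mem_singleton_iff] at hxmem
      rw [hxmem, norm_zero] at hxs
      exact one_ne_zero hxs.symm
    · intro h
      have hex : ∃ x ∈ C ∩ polarCone (mulE A.transpose '' D), x ≠ 0 := by
        by_contra hc
        push_neg at hc
        apply h
        ext z
        simp only [Set.mem_singleton_iff]
        refine ⟨fun hz => hc z hz, fun hz => hz ▸ ⟨hC0, zero_mem_polarCone _⟩⟩
      obtain ⟨x, ⟨hxC, hxP⟩, hx0⟩ := hex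
      have hAx : mulE A x ∈ polarCone D := (mem_polar_transpose_iff A D x).mp hxP
      have hu : f (‖x‖⁻¹ • x) = 0 := by
        rw [hf0, ← hscale x hxC hx0]
        exact hAx
      have h1 : resSval C D A ≤ 0 := by
        rw [hresS, ← hu]
        exact csInf_le hbddb ⟨_, hnorm x hxC hx0, rfl⟩
      have h2 : 0 ≤ resSval C D A := hresS ▸ le_csInf hfTne hfnonneg
      linarith
  · -- third part
    constructor
    · intro h
      have hex : ∃ x ∈ C ∩ polarCone (mulE A.transpose '' D), x ≠ 0 := by
        by_contra hc
        push_neg at hc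
        apply h
        ext z
        simp only [Set.mem_singleton_iff]
        refine ⟨fun hz => hc z hz, fun hz => hz ▸ ⟨hC0, zero_mem_polarCone _⟩⟩
      obtain ⟨x, ⟨hxC, hxP⟩, hx0⟩ := hex
      have hAx : mulE A x ∈ polarCone D := (mem_polar_transpose_iff A D x).mp hxP
      rcases eq_or_ne (mulE A x) 0 with hA0 | hA0
      · right
        intro hsingle
        have : x ∈ {x : Euc m | mulE A x = 0} ∩ C := ⟨hA0, hxC⟩
        rw [hsingle] at this
        exact hx0 this
      · left
        intro hsingle
        have : mulE A x ∈ (mulE A '' C) ∩ polarCone D := ⟨⟨x, hxC, rfl⟩, hAx⟩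
        rw [hsingle] at this
        exact hA0 this
    · rintro (h | h)
      · have hex : ∃ z ∈ (mulE A '' C) ∩ polarCone D, z ≠ 0 := by
          by_contra hc
          push_neg at hc
          apply h
          ext z
          simp only [Set.mem_singleton_iff]
          refine ⟨fun hz => hc z hz, fun hz => hz ▸ ⟨⟨0, hC0,
            map_zero (Matrix.toEuclideanLin A)⟩, zero_mem_polarCone _⟩⟩
        obtain ⟨_, ⟨⟨x, hxC, rfl⟩, hP⟩, hz0⟩ := hex
        intro hsingle
        have hx0 : x ≠ 0 := by
          rintro rfl
          exact hz0 (map_zero (Matrix.toEuclideanLin A))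
        have : x ∈ C ∩ polarCone (mulE A.transpose '' D) :=
          ⟨hxC, (mem_polar_transpose_iff A D x).mpr hP⟩
        rw [hsingle] at this
        exact hx0 this
      · have hex : ∃ z ∈ {x : Euc m | mulE A x = 0} ∩ C, z ≠ 0 := by
          by_contra hc
          push_neg at hc
          apply h
          ext z
          simp only [Set.mem_singleton_iff]
          refine ⟨fun hz => hc z hz, fun hz => hz ▸
            ⟨map_zero (Matrix.toEuclideanLin A), hC0⟩⟩
        obtain ⟨x, ⟨hxK, hxC⟩, hx0⟩ := hex
        intro hsingle
        have hP : mulE A x ∈ polarCone D := by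
          rw [Set.mem_setOf_eq] at hxK
          rw [hxK]
          exact zero_mem_polarCone D
        have : x ∈ C ∩ polarCone (mulE A.transpose '' D) :=
          ⟨hxC, (mem_polar_transpose_iff A D x).mpr hP⟩
        rw [hsingle] at this
        exact hx0 this


end
end

section
/- Let C ⊆ ℝ^m be a closed convex cone with nonempty interior and let A ∈ ℝ^{n×m} with n ≥ m. Then max{ σ_{C→ℝⁿ}(A), σ_{ℝⁿ→C}(−Aᵀ) } ≥ max{ min_{x ∈ S^{m−1}} ‖Ax‖, min_{y ∈ S^{n−1}} ‖Aᵀy‖ }. Equivalently, Renegar's condition number ℛ_C(A) = ‖A‖ / max{ σ_{C→ℝⁿ}(A), σ_{ℝⁿ→C}(−Aᵀ) } is at most the classical condition number κ(A) = ‖A‖ / max{ min_{x ∈ S^{m−1}} ‖Ax‖, min_{y ∈ S^{n−1}} ‖Aᵀy‖ }. -/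
open MeasureTheory ProbabilityTheory Metric Set
open scoped InnerProductSpace
open scoped Classical
open scoped Pointwise

noncomputable section

lemma myMetricProj_univ {k : ℕ} (y : Euc k) : metricProj (Set.univ : Set (Euc k)) y = y := by
  have h : ∃ z, z ∈ (Set.univ : Set (Euc k)) ∧ ∀ w ∈ (Set.univ : Set (Euc k)),
      dist y z ≤ dist y w := ⟨y, trivial, fun w _ => by simp [dist_nonneg]⟩
  rw [metricProj, dif_pos h]
  have h2 := h.choose_spec.2 y trivial
  simp only [dist_self] at h2
  exact (dist_le_zero.mp h2).symm

lemma myMulE_transpose {m n : ℕ} (A : Matrix (Fin n) (Fin m) ℝ) (y : Euc n) :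
    mulE A.transpose y = LinearMap.adjoint (Matrix.toEuclideanLin A) y := by
  have hAT : A.transpose = A.conjTranspose := by
    ext i j; simp [Matrix.conjTranspose_apply]
  rw [mulE, hAT, Matrix.toEuclideanLin_conjTranspose_eq_adjoint]

/-- For a closed convex cone `C ⊆ ℝ^m` with nonempty interior and `A ∈ ℝ^{n×m}`
with `n ≥ m`: `max{σ_{C→ℝⁿ}(A), σ_{ℝⁿ→C}(−Aᵀ)} ≥ max{min_{‖x‖=1} ‖Ax‖, min_{‖y‖=1} ‖Aᵀy‖}`
(equivalently, Renegar's condition number is at most the classical one). -/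
theorem statement11 {m n : ℕ} (hmn : m ≤ n) (C : Set (Euc m))
    (hC : IsClosedConvexCone C) (hCint : (interior C).Nonempty)
    (A : Matrix (Fin n) (Fin m) ℝ) :
    max (sInf ((fun x => ‖mulE A x‖) '' sphere (0 : Euc m) 1))
        (sInf ((fun y => ‖mulE A.transpose y‖) '' sphere (0 : Euc n) 1))
      ≤ max (resSval C Set.univ A) (resSval Set.univ C (-A.transpose)) := by
  have hbddA : BddBelow ((fun x => ‖mulE A x‖) '' sphere (0 : Euc m) 1) := by
    refine ⟨0, ?_⟩; rintro r ⟨x, _, rfl⟩; exact norm_nonneg _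
  have hbddT : BddBelow ((fun y => ‖mulE A.transpose y‖) '' sphere (0 : Euc n) 1) := by
    refine ⟨0, ?_⟩; rintro r ⟨x, _, rfl⟩; exact norm_nonneg _
  have hres : resSval C Set.univ A
      = sInf ((fun x => ‖mulE A x‖) '' (C ∩ sphere 0 1)) := by
    simp only [resSval, myMetricProj_univ]
  have hresnn : 0 ≤ resSval C Set.univ A := by
    rw [hres]
    exact Real.sInf_nonneg (by rintro r ⟨x, _, rfl⟩; exact norm_nonneg _)
  rcases Nat.eq_zero_or_pos m with hm0 | hm
  · -- degenerate case m = 0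
    subst hm0
    have hall : ∀ x : Euc 0, x = 0 := fun x => by ext i; exact i.elim0
    have hsph : (sphere (0 : Euc 0) 1) = ∅ := by
      ext x
      simp only [mem_sphere_iff_norm, Set.mem_empty_iff_false, iff_false]
      rw [hall x]
      simp
    have h1 : sInf ((fun x => ‖mulE A x‖) '' sphere (0 : Euc 0) 1) = 0 := by
      rw [hsph, Set.image_empty, Real.sInf_empty]
    have h2 : sInf ((fun y => ‖mulE A.transpose y‖) '' sphere (0 : Euc n) 1) ≤ 0 := by
      rcases (sphere (0 : Euc n) 1).eq_empty_or_nonempty with he | ⟨y, hy⟩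
      · rw [he, Set.image_empty, Real.sInf_empty]
      · have hz : ‖mulE A.transpose y‖ = 0 := by rw [hall (mulE A.transpose y)]; simp
        calc sInf ((fun y => ‖mulE A.transpose y‖) '' sphere (0 : Euc n) 1)
            ≤ ‖mulE A.transpose y‖ := csInf_le hbddT ⟨y, hy, rfl⟩
          _ = 0 := hz
    apply max_le
    · rw [h1]; exact hresnn.trans (le_max_left _ _)
    · exact h2.trans (hresnn.trans (le_max_left _ _))
  · -- main case m ≥ 1
    haveI : Nonempty (Fin m) := ⟨⟨0, hm⟩⟩
    haveI hntr : Nontrivial (Euc m) := by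
      refine ⟨EuclideanSpace.single (⟨0, hm⟩ : Fin m) (1 : ℝ), 0, ?_⟩
      intro h
      have := congrArg (fun v : Euc m => v ⟨0, hm⟩) h
      simp [EuclideanSpace.single_apply] at this
    obtain ⟨xi, hxi⟩ := hCint
    have hCne : ∃ c ∈ C, c ≠ 0 := by
      rcases eq_or_ne xi 0 with rfl | hxi0
      · have hmem : interior C ∈ nhdsWithin (0 : Euc m) {(0 : Euc m)}ᶜ :=
          mem_nhdsWithin_of_mem_nhds (isOpen_interior.mem_nhds hxi)
        obtain ⟨c, hcmem⟩ := Filter.nonempty_of_mem (Filter.inter_mem hmem self_mem_nhdsWithin)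
        exact ⟨c, interior_subset hcmem.1, Set.mem_compl_singleton_iff.mp hcmem.2⟩
      · exact ⟨xi, interior_subset hxi, hxi0⟩
    obtain ⟨c, hcC, hcne⟩ := hCne
    have hcpos : (0 : ℝ) < ‖c‖ := norm_pos_iff.mpr hcne
    have huC : ‖c‖⁻¹ • c ∈ C := hC.2.2.1 _ (inv_nonneg.mpr hcpos.le) c hcC
    have husph : ‖c‖⁻¹ • c ∈ sphere (0 : Euc m) 1 := by
      rw [mem_sphere_zero_iff_norm, norm_smul, norm_inv, norm_norm]
      exact inv_mul_cancel₀ hcpos.ne'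
    have hstep1 : sInf ((fun x => ‖mulE A x‖) '' sphere (0 : Euc m) 1)
        ≤ resSval C Set.univ A := by
      rw [hres]
      exact csInf_le_csInf hbddA ⟨‖mulE A (‖c‖⁻¹ • c)‖, ⟨_, ⟨huC, husph⟩, rfl⟩⟩
        (Set.image_mono Set.inter_subset_right)
    have hcont : Continuous fun x : Euc m => ‖mulE A x‖ :=
      ((Matrix.toEuclideanLin A).continuous_of_finiteDimensional).norm
    obtain ⟨x₀, hx₀s, hmin⟩ := (isCompact_sphere (0 : Euc m) 1).exists_isMinOn
      ⟨_, husph⟩ hcont.continuousOn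
    have hx₀norm : ‖x₀‖ = 1 := mem_sphere_zero_iff_norm.mp hx₀s
    have hx₀ne : x₀ ≠ 0 := by
      intro h; rw [h] at hx₀norm; simp at hx₀norm
    have hsval : sInf ((fun x => ‖mulE A x‖) '' sphere (0 : Euc m) 1) = ‖mulE A x₀‖ :=
      le_antisymm (csInf_le hbddA ⟨x₀, hx₀s, rfl⟩)
        (le_csInf ⟨_, ⟨x₀, hx₀s, rfl⟩⟩ (by rintro r ⟨x, hx, rfl⟩; exact isMinOn_iff.mp hmin x hx))
    have hkey : ∃ y ∈ sphere (0 : Euc n) 1, ‖mulE A.transpose y‖ ≤ ‖mulE A x₀‖ := by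
      rcases eq_or_ne (mulE A x₀) 0 with hz | hz
      · -- A has nontrivial kernel; find y ⊥ range A
        have hker : LinearMap.ker (Matrix.toEuclideanLin A) ≠ ⊥ :=
          Submodule.ne_bot_iff _ |>.mpr ⟨x₀, LinearMap.mem_ker.mpr hz, hx₀ne⟩
        have hkerpos : 0 < Module.finrank ℝ (LinearMap.ker (Matrix.toEuclideanLin A)) := by
          by_contra h
          push_neg at h
          rw [Nat.le_zero, Submodule.finrank_eq_zero] at h
          exact hker h
        have h1 := LinearMap.finrank_range_add_finrank_ker (Matrix.toEuclideanLin A)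
        rw [finrank_euclideanSpace_fin] at h1
        have horth : (LinearMap.range (Matrix.toEuclideanLin A))ᗮ ≠ ⊥ := by
          intro h
          have h2 := Submodule.finrank_add_finrank_orthogonal
            (K := LinearMap.range (Matrix.toEuclideanLin A))
          rw [h, finrank_bot, finrank_euclideanSpace_fin] at h2
          omega
        obtain ⟨y₁, hy₁mem, hy₁ne⟩ := (Submodule.ne_bot_iff _).mp horth
        have hy₁pos : (0 : ℝ) < ‖y₁‖ := norm_pos_iff.mpr hy₁ne
        refine ⟨‖y₁‖⁻¹ • y₁, ?_, ?_⟩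
        · rw [mem_sphere_zero_iff_norm, norm_smul, norm_inv, norm_norm]
          exact inv_mul_cancel₀ hy₁pos.ne'
        · have hsm : (‖y₁‖⁻¹ • y₁) ∈ (LinearMap.range (Matrix.toEuclideanLin A))ᗮ :=
            Submodule.smul_mem _ _ hy₁mem
          have h0 : ⟪mulE A.transpose (‖y₁‖⁻¹ • y₁), mulE A.transpose (‖y₁‖⁻¹ • y₁)⟫_ℝ = 0 := by
            rw [myMulE_transpose, LinearMap.adjoint_inner_left]
            exact (Submodule.mem_orthogonal' _ _).mp hsm _ (LinearMap.mem_range_self _ _)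
          rw [inner_self_eq_zero.mp h0]
          simp
      · -- Rayleigh quotient argument
        have hspos : (0 : ℝ) < ‖mulE A x₀‖ := norm_pos_iff.mpr hz
        set Acl : Euc m →L[ℝ] Euc n :=
          LinearMap.toContinuousLinearMap (Matrix.toEuclideanLin A) with hAcl
        set T : Euc m →L[ℝ] Euc m := ContinuousLinearMap.adjoint Acl ∘L Acl with hTdef
        have hTsa : IsSelfAdjoint T := by
          rw [ContinuousLinearMap.isSelfAdjoint_iff', hTdef,
            ContinuousLinearMap.adjoint_comp, ContinuousLinearMap.adjoint_adjoint]
        have hre : ∀ x : Euc m, T.reApplyInnerSelf x = ‖mulE A x‖ ^ 2 := by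
          intro x
          have h1 : T x = ContinuousLinearMap.adjoint Acl (Acl x) := rfl
          have h2 : ⟪T x, x⟫_ℝ = ⟪Acl x, Acl x⟫_ℝ := by
            rw [h1, ContinuousLinearMap.adjoint_inner_left]
          simp only [ContinuousLinearMap.reApplyInnerSelf]
          rw [h2, real_inner_self_eq_norm_sq]
          rfl
        have hextr : IsMinOn T.reApplyInnerSelf (sphere (0 : Euc m) ‖x₀‖) x₀ := by
          rw [isMinOn_iff]
          intro x hx
          rw [hx₀norm] at hx
          rw [hre, hre]
          exact pow_le_pow_left₀ (norm_nonneg _) (isMinOn_iff.mp hmin x hx) 2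
        have heig := hTsa.eq_smul_self_of_isLocalExtrOn (Or.inl hextr.localize)
        have hray : T.rayleighQuotient x₀ = ‖mulE A x₀‖ ^ 2 := by
          simp [ContinuousLinearMap.rayleighQuotient, hre, hx₀norm]
        have hT0 : T x₀ = (‖mulE A x₀‖ ^ 2) • x₀ := by
          rw [heig, hray]
          norm_num
        refine ⟨‖mulE A x₀‖⁻¹ • mulE A x₀, ?_, ?_⟩
        · rw [mem_sphere_zero_iff_norm, norm_smul, norm_inv, norm_norm]
          exact inv_mul_cancel₀ hspos.ne'
        · have hadj : mulE A.transpose (‖mulE A x₀‖⁻¹ • mulE A x₀)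
              = ‖mulE A x₀‖⁻¹ • ((‖mulE A x₀‖ ^ 2) • x₀) := by
            have h3 : LinearMap.adjoint (Matrix.toEuclideanLin A) (mulE A x₀) = T x₀ := by
              rw [LinearMap.adjoint_eq_toCLM_adjoint]
              rfl
            rw [myMulE_transpose, LinearMap.map_smul, h3, hT0]
          rw [hadj, smul_smul, norm_smul, hx₀norm, mul_one]
          have h4 : ‖mulE A x₀‖⁻¹ * ‖mulE A x₀‖ ^ 2 = ‖mulE A x₀‖ := by
            field_simp
          rw [h4, Real.norm_eq_abs, abs_of_pos hspos]
    obtain ⟨y, hy, hle⟩ := hkey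
    have hstep2 : sInf ((fun y => ‖mulE A.transpose y‖) '' sphere (0 : Euc n) 1)
        ≤ ‖mulE A x₀‖ := (csInf_le hbddT ⟨y, hy, rfl⟩).trans hle
    rw [hsval] at hstep1
    apply max_le
    · rw [hsval]
      exact hstep1.trans (le_max_left _ _)
    · exact (hstep2.trans hstep1).trans (le_max_left _ _)

end
end

section
/- Let f : ℝ → ℝ be Borel measurable and let K, K' ⊆ ℝ^m be convex bodies such that K ∪ K' is convex (hence K ∩ K' is a nonempty convex body). Assume that f(h_K(g)), f(h_{K'}(g)), f(h_{K∪K'}(g)) and f(h_{K∩K'}(g)) are integrable, where g is a standard Gaussian vector in ℝ^m. Then μ_f(K ∪ K') + μ_f(K ∩ K') = μ_f(K) + μ_f(K'). -/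
open MeasureTheory ProbabilityTheory Metric Set
open scoped InnerProductSpace
open scoped Classical
open scoped Pointwise

noncomputable section

lemma contInner {k : ℕ} (x : Euc k) : Continuous fun z : Euc k => ⟪x, z⟫_ℝ :=
  continuous_const.inner continuous_id

lemma suppFn_eq_max {k : ℕ} {K : Set (Euc k)} (hKcp : IsCompact K) {x z : Euc k}
    (hz : z ∈ K) (hmax : ∀ y ∈ K, ⟪x, y⟫_ℝ ≤ ⟪x, z⟫_ℝ) : suppFn K x = ⟪x, z⟫_ℝ := by
  refine IsGreatest.csSup_eq ⟨⟨z, hz, rfl⟩, ?_⟩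
  rintro _ ⟨y, hy, rfl⟩
  exact hmax y hy

lemma suppFn_union_eq {k : ℕ} {K K' : Set (Euc k)}
    (hKcp : IsCompact K) (hKne : K.Nonempty)
    (hK'cp : IsCompact K') (hK'ne : K'.Nonempty) (x : Euc k) :
    suppFn (K ∪ K') x = max (suppFn K x) (suppFn K' x) := by
  have hbK : BddAbove ((fun z => ⟪x, z⟫_ℝ) '' K) :=
    (hKcp.image (contInner x)).bddAbove
  have hbK' : BddAbove ((fun z => ⟪x, z⟫_ℝ) '' K') :=
    (hK'cp.image (contInner x)).bddAbove
  unfold suppFn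
  rw [image_union, csSup_union hbK (hKne.image _) hbK' (hK'ne.image _)]

lemma suppFn_inter_eq_left {k : ℕ} {K K' : Set (Euc k)}
    (hKcp : IsCompact K) (hKne : K.Nonempty)
    (hK'cp : IsCompact K') (hK'ne : K'.Nonempty)
    (hU : Convex ℝ (K ∪ K')) {x : Euc k}
    (hle : suppFn K x ≤ suppFn K' x) :
    suppFn (K ∩ K') x = suppFn K x := by
  obtain ⟨z, hzK, hz⟩ := hKcp.exists_isMaxOn hKne (contInner x).continuousOn
  obtain ⟨w, hwK, hw⟩ := hK'cp.exists_isMaxOn hK'ne (contInner x).continuousOn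
  have hzmax : ∀ y ∈ K, ⟪x, y⟫_ℝ ≤ ⟪x, z⟫_ℝ := fun y hy => hz hy
  have hwmax : ∀ y ∈ K', ⟪x, y⟫_ℝ ≤ ⟪x, w⟫_ℝ := fun y hy => hw hy
  have hK_eq : suppFn K x = ⟪x, z⟫_ℝ := suppFn_eq_max hKcp hzK hzmax
  have hK'_eq : suppFn K' x = ⟪x, w⟫_ℝ := suppFn_eq_max hK'cp hwK hwmax
  have hzw : ⟪x, z⟫_ℝ ≤ ⟪x, w⟫_ℝ := by rw [← hK_eq, ← hK'_eq]; exact hle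
  -- find a point in K ∩ K' on the segment [z, w]
  have hseg : segment ℝ z w ⊆ K ∪ K' :=
    hU.segment_subset (mem_union_left _ hzK) (mem_union_right _ hwK)
  have hpre : IsPreconnected (segment ℝ z w) := (convex_segment z w).isPreconnected
  obtain ⟨p, hpseg, hpK, hpK'⟩ :
      (segment ℝ z w ∩ (K ∩ K')).Nonempty := by
    rcases isPreconnected_closed_iff.mp hpre K K' hKcp.isClosed hK'cp.isClosed hseg
      ⟨z, left_mem_segment ℝ z w, hzK⟩ ⟨w, right_mem_segment ℝ z w, hwK⟩ with ⟨p, hp1, hp2, hp3⟩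
    exact ⟨p, hp1, hp2, hp3⟩
  have hpval : ⟪x, z⟫_ℝ ≤ ⟪x, p⟫_ℝ := by
    obtain ⟨a, b, ha, hb, hab, rfl⟩ := hpseg
    have : ⟪x, a • z + b • w⟫_ℝ = a * ⟪x, z⟫_ℝ + b * ⟪x, w⟫_ℝ := by
      rw [inner_add_right, real_inner_smul_right, real_inner_smul_right]
    rw [this]
    calc ⟪x, z⟫_ℝ = a * ⟪x, z⟫_ℝ + b * ⟪x, z⟫_ℝ := by rw [← add_mul, hab, one_mul]
      _ ≤ a * ⟪x, z⟫_ℝ + b * ⟪x, w⟫_ℝ := by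
          gcongr
  refine le_antisymm ?_ ?_
  · rw [hK_eq]
    refine csSup_le ⟨_, ⟨p, ⟨hpK, hpK'⟩, rfl⟩⟩ ?_
    rintro _ ⟨y, hy, rfl⟩
    exact hzmax y hy.1
  · rw [hK_eq]
    refine le_trans hpval (le_csSup ?_ ⟨p, ⟨hpK, hpK'⟩, rfl⟩)
    exact ((hKcp.image (contInner x)).bddAbove).mono
      (image_mono inter_subset_left)

lemma suppFn_inter_eq {k : ℕ} {K K' : Set (Euc k)}
    (hKcp : IsCompact K) (hKne : K.Nonempty)
    (hK'cp : IsCompact K') (hK'ne : K'.Nonempty)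
    (hU : Convex ℝ (K ∪ K')) (x : Euc k) :
    suppFn (K ∩ K') x = min (suppFn K x) (suppFn K' x) := by
  rcases le_total (suppFn K x) (suppFn K' x) with h | h
  · rw [min_eq_left h, suppFn_inter_eq_left hKcp hKne hK'cp hK'ne hU h]
  · rw [min_eq_right h, inter_comm,
      suppFn_inter_eq_left hK'cp hK'ne hKcp hKne (union_comm K K' ▸ hU) h]

/-- For convex bodies `K, K' ⊆ ℝ^m` with `K ∪ K'` convex and Borel `f` with
all four compositions integrable: `μ_f(K ∪ K') + μ_f(K ∩ K') = μ_f(K) + μ_f(K')`. -/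
theorem statement12 {m : ℕ} (f : ℝ → ℝ) (hf : Measurable f)
    (K K' : Set (Euc m))
    (hK : Convex ℝ K) (hKcp : IsCompact K) (hKne : K.Nonempty)
    (hK' : Convex ℝ K') (hK'cp : IsCompact K') (hK'ne : K'.Nonempty)
    (hU : Convex ℝ (K ∪ K'))
    (h1 : Integrable (fun g => f (suppFn K g)) (stdGaussianE m))
    (h2 : Integrable (fun g => f (suppFn K' g)) (stdGaussianE m))
    (h3 : Integrable (fun g => f (suppFn (K ∪ K') g)) (stdGaussianE m))
    (h4 : Integrable (fun g => f (suppFn (K ∩ K') g)) (stdGaussianE m)) :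
    (∫ g, f (suppFn (K ∪ K') g) ∂(stdGaussianE m))
        + ∫ g, f (suppFn (K ∩ K') g) ∂(stdGaussianE m)
      = (∫ g, f (suppFn K g) ∂(stdGaussianE m))
        + ∫ g, f (suppFn K' g) ∂(stdGaussianE m) := by
  have key : ∀ g : Euc m, f (suppFn (K ∪ K') g) + f (suppFn (K ∩ K') g)
      = f (suppFn K g) + f (suppFn K' g) := by
    intro g
    rw [suppFn_union_eq hKcp hKne hK'cp hK'ne g,
      suppFn_inter_eq hKcp hKne hK'cp hK'ne hU g]
    rcases le_total (suppFn K g) (suppFn K' g) with h | h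
    · rw [max_eq_right h, min_eq_left h, add_comm]
    · rw [max_eq_left h, min_eq_right h]
  rw [← integral_add h3 h4, ← integral_add h1 h2]
  exact integral_congr_ae (Filter.Eventually.of_forall key)

end
end

section
/- Let M ⊆ S^{m−1} be a closed set, K := conv({0} ∪ M) ⊆ ℝ^m, and let K' ⊆ B^n be a convex body with 0 ∈ K'. Then for all x₁, x₂ ∈ {0} ∪ M and all y₁, y₂ ∈ K', ‖x₁ ⊗ y₁ − x₂ ⊗ y₂‖ ≤ ‖(x₁, y₁) − (x₂, y₂)‖ and ‖x₁ ⊗ y₁‖ ≤ ‖(x₁, y₁)‖; consequently the map (x,y) ↦ x ⊗ y from ({0} ∪ M) × K' onto ({0} ∪ M) ⊗ K' witnesses that the convex tensor product K ⊗̂ K' := conv{ x ⊗ y : x ∈ K, y ∈ K' } is a 0-contraction of K × K'. -/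
open MeasureTheory ProbabilityTheory Metric Set
open scoped InnerProductSpace
open scoped Classical
open scoped Pointwise

noncomputable section

set_option synthInstance.maxHeartbeats 1000000

-- auxiliary lemmas

lemma sum_pad' {α : Type*} [AddCommMonoid α] {N c : ℕ} (hle : c ≤ N) (f : ℕ → α)
    (hf : ∀ i, c ≤ i → f i = 0) :
    ∑ i : Fin N, f i = ∑ j : Fin c, f j := by
  rw [Fin.sum_univ_eq_sum_range (fun i => f i) N, Fin.sum_univ_eq_sum_range (fun i => f i) c]
  exact (Finset.sum_subset (Finset.range_subset_range.2 hle)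
    (fun i _ hi => hf i (by simpa using hi))).symm

lemma isCompact_convexHull' {E : Type*} [NormedAddCommGroup E] [NormedSpace ℝ E]
    [FiniteDimensional ℝ E] {s : Set E} (hs : IsCompact s) :
    IsCompact (convexHull ℝ s) := by
  rcases s.eq_empty_or_nonempty with rfl | ⟨x₀, hx₀⟩
  · simpa using isCompact_empty
  set d := Module.finrank ℝ E with hd
  set N := d + 1 with hN
  set f : (Fin N → ℝ) × (Fin N → E) → E := fun p => ∑ i, p.1 i • p.2 i with hf
  have hcont : Continuous f := by
    apply continuous_finset_sum
    intro i _
    exact ((continuous_apply i).comp continuous_fst).smul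
      ((continuous_apply i).comp continuous_snd)
  have hcomp : IsCompact ((stdSimplex ℝ (Fin N)) ×ˢ (Set.univ.pi fun _ : Fin N => s)) :=
    (isCompact_stdSimplex _ _).prod (isCompact_univ_pi fun _ => hs)
  have himg : convexHull ℝ s
      = f '' ((stdSimplex ℝ (Fin N)) ×ˢ (Set.univ.pi fun _ : Fin N => s)) := by
    apply Subset.antisymm
    · intro x hx
      rw [convexHull_eq_union] at hx
      simp only [mem_iUnion] at hx
      obtain ⟨t, hts, hAI, hxt⟩ := hx
      have hcard : t.card ≤ N := by
        have h1 := hAI.card_le_finrank_succ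
        have h2 : Module.finrank ℝ (vectorSpan ℝ (Set.range ((↑) : t → E))) ≤ d :=
          Submodule.finrank_le _
        rw [Fintype.card_coe] at h1
        omega
      rw [Finset.mem_convexHull'] at hxt
      obtain ⟨w, hw0, hw1, hwx⟩ := hxt
      set e := t.equivFin with he
      set gw : ℕ → ℝ := fun i => if h : i < t.card then w (e.symm ⟨i, h⟩) else 0 with hgw
      set gz : ℕ → E := fun i => if h : i < t.card then (e.symm ⟨i, h⟩ : E) else x₀ with hgz
      have hgwj : ∀ j : Fin t.card, gw ↑j = w (e.symm j) := by
        intro j; simp only [hgw]; rw [dif_pos j.isLt]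
      have hgzj : ∀ j : Fin t.card, gz ↑j = (e.symm j : E) := by
        intro j; simp only [hgz]; rw [dif_pos j.isLt]
      refine ⟨(fun i => gw i, fun i => gz i), ⟨⟨?_, ?_⟩, ?_⟩, ?_⟩
      · intro i
        simp only [hgw]
        split
        · exact hw0 _ (Finset.coe_mem _)
        · exact le_refl _
      · show ∑ i : Fin N, gw ↑i = 1
        rw [sum_pad' hcard gw (fun i hi => by simp [hgw, Nat.not_lt.2 hi])]
        rw [Finset.sum_congr rfl (fun j _ => hgwj j),
          Equiv.sum_comp e.symm (fun a => w ↑a), Finset.sum_coe_sort]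
        exact hw1
      · intro i _
        simp only [hgz]
        split
        · exact hts (Finset.coe_mem _)
        · exact hx₀
      · show ∑ i : Fin N, gw ↑i • gz ↑i = x
        have hv : ∀ i, t.card ≤ i → gw i • gz i = 0 := by
          intro i hi; simp [hgw, Nat.not_lt.2 hi]
        rw [sum_pad' hcard (fun i => gw i • gz i) hv]
        rw [Finset.sum_congr rfl (fun j _ => by rw [hgwj j, hgzj j]),
          Equiv.sum_comp e.symm (fun a : {x // x ∈ t} => w ↑a • (a : E)),
          Finset.sum_coe_sort t (fun a => w a • a)]
        exact hwx
    · rintro x ⟨⟨w, z⟩, ⟨hw, hz⟩, rfl⟩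
      exact (convex_convexHull ℝ s).sum_mem (fun i _ => hw.1 i) hw.2
        (fun i _ => subset_convexHull ℝ s (hz i (mem_univ i)))
  rw [himg]
  exact hcomp.image hcont

lemma inner_kron {m n : ℕ} (x₁ x₂ : Euc m) (y₁ y₂ : Euc n) :
    ⟪kron x₁ y₁, kron x₂ y₂⟫_ℝ = ⟪x₁, x₂⟫_ℝ * ⟪y₁, y₂⟫_ℝ := by
  simp only [PiLp.inner_apply, RCLike.inner_apply, conj_trivial]
  rw [Finset.sum_mul_sum, Fintype.sum_prod_type]
  show ∑ i, ∑ j, (x₂ i * y₂ j) * (x₁ i * y₁ j) = _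
  apply Finset.sum_congr rfl; intro i _; apply Finset.sum_congr rfl; intro j _; ring

lemma norm_kron_sq {m n : ℕ} (x : Euc m) (y : Euc n) : ‖kron x y‖^2 = ‖x‖^2 * ‖y‖^2 := by
  rw [← real_inner_self_eq_norm_sq, inner_kron, real_inner_self_eq_norm_sq,
    real_inner_self_eq_norm_sq]

lemma norm_pairL2_sq {m n : ℕ} (x : Euc m) (y : Euc n) : ‖pairL2 x y‖^2 = ‖x‖^2 + ‖y‖^2 := by
  rw [WithLp.prod_norm_sq_eq_of_L2]; rfl

lemma real_key (s t u v a b : ℝ) (hs : s = 0 ∨ s = 1) (ht : t = 0 ∨ t = 1)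
    (hu : 0 ≤ u) (hv : 0 ≤ v) (hu1 : u ≤ 1) (hv1 : v ≤ 1)
    (ha : |a| ≤ s * t) (hb : |b| ≤ u * v) :
    s^2*u^2 - 2*(a*b) + t^2*v^2 ≤ (s^2 - 2*a + t^2) + (u^2 - 2*b + v^2) := by
  have hb1 : b ≤ u * v := (abs_le.1 hb).2
  have hb2 : -(u*v) ≤ b := (abs_le.1 hb).1
  rcases hs with hs | hs <;> rcases ht with ht | ht <;> subst hs ht <;>
  · first
    | (have h1 := (abs_le.1 ha).2; have h2 := (abs_le.1 ha).1
       have haz : a = 0 := by nlinarith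
       subst haz
       nlinarith [sq_nonneg (u - v), sq_nonneg (1 - v), sq_nonneg (1 - u),
         mul_nonneg hu hv])
    | (have ha1 : a ≤ 1 := by simpa using (abs_le.1 ha).2
       have hbb : b ≤ 1 := hb1.trans (by nlinarith)
       nlinarith [mul_nonneg (sub_nonneg.2 ha1) (sub_nonneg.2 hbb)])

lemma key_ineq {m n : ℕ} (x₁ x₂ : Euc m) (y₁ y₂ : Euc n)
    (hx₁ : x₁ = 0 ∨ ‖x₁‖ = 1) (hx₂ : x₂ = 0 ∨ ‖x₂‖ = 1)
    (hy₁ : ‖y₁‖ ≤ 1) (hy₂ : ‖y₂‖ ≤ 1) :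
    ‖kron x₁ y₁ - kron x₂ y₂‖ ≤ ‖pairL2 x₁ y₁ - pairL2 x₂ y₂‖ ∧
      ‖kron x₁ y₁‖ ≤ ‖pairL2 x₁ y₁‖ := by
  have hx₁' : ‖x₁‖ = 0 ∨ ‖x₁‖ = 1 := by rcases hx₁ with h | h <;> simp [h]
  have hx₂' : ‖x₂‖ = 0 ∨ ‖x₂‖ = 1 := by rcases hx₂ with h | h <;> simp [h]
  constructor
  · have hip : ⟪pairL2 x₁ y₁, pairL2 x₂ y₂⟫_ℝ = ⟪x₁, x₂⟫_ℝ + ⟪y₁, y₂⟫_ℝ :=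
      WithLp.prod_inner_apply _ _
    have hsq : ‖kron x₁ y₁ - kron x₂ y₂‖^2 ≤ ‖pairL2 x₁ y₁ - pairL2 x₂ y₂‖^2 := by
      rw [norm_sub_sq_real, norm_sub_sq_real, inner_kron, norm_kron_sq, norm_kron_sq,
        norm_pairL2_sq, norm_pairL2_sq, hip]
      have := real_key ‖x₁‖ ‖x₂‖ ‖y₁‖ ‖y₂‖ ⟪x₁, x₂⟫_ℝ ⟪y₁, y₂⟫_ℝ hx₁' hx₂'
        (norm_nonneg _) (norm_nonneg _) hy₁ hy₂
        (abs_real_inner_le_norm _ _) (abs_real_inner_le_norm _ _)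
      linarith
    nlinarith [norm_nonneg (kron x₁ y₁ - kron x₂ y₂), norm_nonneg (pairL2 x₁ y₁ - pairL2 x₂ y₂)]
  · have hsq : ‖kron x₁ y₁‖^2 ≤ ‖pairL2 x₁ y₁‖^2 := by
      rw [norm_kron_sq, norm_pairL2_sq]
      rcases hx₁' with h | h <;> rw [h] <;> nlinarith [norm_nonneg y₁]
    nlinarith [norm_nonneg (kron x₁ y₁), norm_nonneg (pairL2 x₁ y₁)]

/-- kron as a linear map in the first variable. -/
def kronL {m n : ℕ} (y : Euc n) : Euc m →ₗ[ℝ] EuclideanSpace ℝ (Fin m × Fin n) where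
  toFun x := kron x y
  map_add' x x' := by
    ext p
    show (x p.1 + x' p.1) * y p.2 = x p.1 * y p.2 + x' p.1 * y p.2
    ring
  map_smul' c x := by
    ext p
    show (c * x p.1) * y p.2 = c * (x p.1 * y p.2)
    ring

lemma kron_continuous {m n : ℕ} :
    Continuous (fun p : Euc m × Euc n => kron p.1 p.2) := by
  apply (EuclideanSpace.equiv (Fin m × Fin n) ℝ).symm.continuous.comp
  apply continuous_pi
  intro q
  exact (((EuclideanSpace.proj q.1).continuous.comp continuous_fst).mul
    ((EuclideanSpace.proj q.2).continuous.comp continuous_snd))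


/-- For closed `M ⊆ S^{m−1}`, `K = conv({0} ∪ M)` and a convex body
`K' ⊆ B^n` with `0 ∈ K'`: the map `(x,y) ↦ x ⊗ y` is `1`-Lipschitz and norm-nonincreasing on
`({0} ∪ M) × K'`, and consequently `K ⊗̂ K'` is a `0`-contraction of `K × K'`. -/
theorem statement14 {m n : ℕ} (M : Set (Euc m)) (hM : IsClosed M)
    (hMs : M ⊆ sphere (0 : Euc m) 1)
    (K' : Set (Euc n)) (hK' : Convex ℝ K') (hK'cp : IsCompact K') (hK'ne : K'.Nonempty)
    (h0 : (0 : Euc n) ∈ K') (hK'b : K' ⊆ closedBall 0 1) :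
    (∀ x₁ ∈ ({0} : Set (Euc m)) ∪ M, ∀ x₂ ∈ ({0} : Set (Euc m)) ∪ M, ∀ y₁ ∈ K', ∀ y₂ ∈ K',
      ‖kron x₁ y₁ - kron x₂ y₂‖ ≤ ‖pairL2 x₁ y₁ - pairL2 x₂ y₂‖ ∧
      ‖kron x₁ y₁‖ ≤ ‖pairL2 x₁ y₁‖) ∧
    IsZeroContractionOf
      (prodL2 (convexHull ℝ (({0} : Set (Euc m)) ∪ M)) K')
      (convexHull ℝ (Set.image2 kron (convexHull ℝ (({0} : Set (Euc m)) ∪ M)) K')) := by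
  set S : Set (Euc m) := ({0} : Set (Euc m)) ∪ M with hS
  have hmemS : ∀ x ∈ S, x = 0 ∨ ‖x‖ = 1 := by
    rintro x (hx | hx)
    · exact Or.inl hx
    · exact Or.inr (by simpa using mem_sphere_zero_iff_norm.1 (hMs hx))
  have hmemK' : ∀ y ∈ K', ‖y‖ ≤ 1 := fun y hy => mem_closedBall_zero_iff.1 (hK'b hy)
  have hpart1 : ∀ x₁ ∈ S, ∀ x₂ ∈ S, ∀ y₁ ∈ K', ∀ y₂ ∈ K',
      ‖kron x₁ y₁ - kron x₂ y₂‖ ≤ ‖pairL2 x₁ y₁ - pairL2 x₂ y₂‖ ∧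
      ‖kron x₁ y₁‖ ≤ ‖pairL2 x₁ y₁‖ := fun x₁ h1 x₂ h2 y₁ hy1 y₂ hy2 =>
    key_ineq x₁ x₂ y₁ y₂ (hmemS _ h1) (hmemS _ h2) (hmemK' _ hy1) (hmemK' _ hy2)
  refine ⟨hpart1, ?_⟩
  -- setup
  have hScp : IsCompact S := isCompact_singleton.union
    ((isCompact_sphere (0 : Euc m) 1).of_isClosed_subset hM hMs)
  set K := convexHull ℝ S with hK
  have hKcp : IsCompact K := isCompact_convexHull' hScp
  set el := WithLp.linearEquiv 2 ℝ (Euc m × Euc n) with hel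
  have hprodL2 : ∀ (A : Set (Euc m)) (B : Set (Euc n)),
      prodL2 A B = ⇑el.symm '' (A ×ˢ B) := by
    intro A B
    ext q
    constructor
    · rintro ⟨h1, h2⟩
      exact ⟨el q, ⟨h1, h2⟩, el.symm_apply_apply q⟩
    · rintro ⟨p, ⟨hp1, hp2⟩, rfl⟩
      exact ⟨hp1, hp2⟩
  set φ : WithLp 2 (Euc m × Euc n) → EuclideanSpace ℝ (Fin m × Fin n) :=
    fun q => kron ((WithLp.equiv 2 (Euc m × Euc n)) q).1 ((WithLp.equiv 2 (Euc m × Euc n)) q).2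
    with hφ
  refine ⟨prodL2 S K', Set.image2 kron S K', φ, ?_, ?_, ?_, ?_, ?_⟩
  · -- closure (convexHull (prodL2 S K')) = prodL2 K K'
    have h1 : convexHull ℝ (prodL2 S K') = prodL2 K K' := by
      have him := el.symm.toLinearMap.image_convexHull (S ×ˢ K')
      simp only [LinearEquiv.coe_coe] at him
      rw [hprodL2, hprodL2, ← him, convexHull_prod, hK'.convexHull_eq]
    rw [h1]
    apply IsClosed.closure_eq
    rw [hprodL2]
    have hcont : Continuous ⇑el.symm :=
      (WithLp.prodContinuousLinearEquiv 2 ℝ (Euc m) (Euc n)).symm.continuous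
    exact ((hKcp.prod hK'cp).image hcont).isClosed
  · -- closure (convexHull (image2 kron S K')) = convexHull (image2 kron K K')
    have h2 : convexHull ℝ (Set.image2 kron S K') = convexHull ℝ (Set.image2 kron K K') := by
      apply Subset.antisymm
    -- ⊆
      · exact convexHull_mono (image2_subset (subset_convexHull ℝ S) Subset.rfl)
      · apply convexHull_min ?_ (convex_convexHull ℝ _)
        rintro z ⟨x, hx, y, hy, rfl⟩
        have himg : (kronL (m := m) y) '' (convexHull ℝ S)
            = convexHull ℝ ((kronL (m := m) y) '' S) := (kronL y).image_convexHull S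
        have hmem : kron x y ∈ (kronL (m := m) y) '' (convexHull ℝ S) :=
          mem_image_of_mem _ hx
        rw [himg] at hmem
        refine convexHull_mono ?_ hmem
        rintro w ⟨x', hx', rfl⟩
        exact mem_image2_of_mem hx' hy
    rw [← h2]
    apply IsClosed.closure_eq
    have hcpt : IsCompact (Set.image2 kron S K') := by
      rw [← Set.image_prod]
      exact (hScp.prod hK'cp).image kron_continuous
    exact (isCompact_convexHull' hcpt).isClosed
  · -- φ '' M₁ = M₂
    ext z
    constructor
    · rintro ⟨q, ⟨h1, h2⟩, rfl⟩
      exact ⟨_, h1, _, h2, rfl⟩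
    · rintro ⟨x, hx, y, hy, rfl⟩
      exact ⟨pairL2 x y, ⟨hx, hy⟩, rfl⟩
  · rintro q ⟨h1, h2⟩ q' ⟨h1', h2'⟩
    exact (hpart1 _ h1 _ h1' _ h2 _ h2').1
  · rintro q ⟨h1, h2⟩
    exact (hpart1 _ h1 _ h1 _ h2 _ h2).2

end
end
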